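/- arXiv:2507.15421 — 4 statements merged into one kernel-verified Lean document; each statement's English description precedes it below -/
import Mathlib

section
/- Let t ∈ ℝ and for n ∈ ℕ, n ≥ 1, define ω_n = 2·arccos(cos²(t/(2n))). Then n·ω_n → √2·|t| as n → ∞. -/
/-!
Since `1 - cos⁴ y = sin² y (1 + cos² y)`, one has `arccos (cos² y) = arcsin (|sin y| √(1 + cos² y))`.
As `arcsin` and `sin` are both asymptotic to the identity at `0`, this gives
`arccos (cos² y) ~ √2 |y|` as `y → 0`; substituting `y = t / (2n)` and multiplying by `2n` yields
`n ω n ~ √2 |t|`.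
-/

open Real Filter Asymptotics Topology

theorem Asymptotics.IsEquivalent.norm {α E : Type*} [NormedAddCommGroup E] {l : Filter α}
    {u v : α → E} (h : u ~[l] v) : (fun x => ‖u x‖) ~[l] fun x => ‖v x‖ :=
  (isBigO_of_le l fun x => by simpa using abs_norm_sub_norm_le (u x) (v x)).trans_isLittleO
    h.isLittleO.norm_right

theorem Real.isEquivalent_arcsin : arcsin ~[𝓝 0] id := by
  simpa using! (hasDerivAt_arcsin (x := 0) (by norm_num) (by norm_num)).isLittleO

theorem Real.arccos_cos_sq (y : ℝ) :
    arccos (cos y ^ 2) = arcsin (|sin y| * √(1 + cos y ^ 2)) := by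
  have h : 1 - (cos y ^ 2) ^ 2 = sin y ^ 2 * (1 + cos y ^ 2) := by
    rw [sin_sq]; ring
  rw [arccos_eq_arcsin (sq_nonneg _), h, sqrt_mul (sq_nonneg _), sqrt_sq_eq_abs]

theorem Real.isEquivalent_arccos_cos_sq :
    (fun y => arccos (cos y ^ 2)) ~[𝓝 0] fun y => √2 * |y| := by
  set u : ℝ → ℝ := fun y => |sin y| * √(1 + cos y ^ 2)
  have hu : Tendsto u (𝓝 0) (𝓝 0) := by
    have : Continuous u := by fun_prop
    simpa [u] using this.tendsto 0
  have hsqrt : (fun y => √(1 + cos y ^ 2)) ~[𝓝 0] Function.const ℝ √2 := by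
    rw [isEquivalent_const_iff_tendsto (by positivity)]
    have : Continuous fun y : ℝ => √(1 + cos y ^ 2) := by fun_prop
    simpa [one_add_one_eq_two] using this.tendsto 0
  have hu_equiv : u ~[𝓝 0] fun y => |y| * √2 := isEquivalent_sin.norm.mul hsqrt
  simpa [u, arccos_cos_sq, mul_comm] using!
    (isEquivalent_arcsin.comp_tendsto hu).trans hu_equiv

/-- With `ω n = 2 arccos (cos²(t/(2n)))`, one has `n ω n → √2 |t|` as `n → ∞`. -/
theorem n_omega_tendsto (t : ℝ) (ω : ℕ → ℝ)
    (hω : ∀ n : ℕ, 1 ≤ n → ω n = 2 * Real.arccos ((Real.cos (t / (2 * n))) ^ 2)) :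
    Tendsto (fun n : ℕ => (n : ℝ) * ω n) atTop (nhds (Real.sqrt 2 * |t|)) := by
  have hx : Tendsto (fun n : ℕ => t / (2 * n)) atTop (𝓝 0) :=
    tendsto_const_nhds.div_atTop (tendsto_natCast_atTop_atTop.const_mul_atTop two_pos)
  have hequiv : (fun n : ℕ => (n : ℝ) * ω n) ~[atTop] fun n => 2 * n * (√2 * |t / (2 * n)|) := by
    refine (IsEquivalent.refl.mul (isEquivalent_arccos_cos_sq.comp_tendsto hx)).congr_left ?_
    filter_upwards [eventually_ge_atTop 1] with n hn
    simp only [Pi.mul_apply, Function.comp_apply, hω n hn]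
    ring
  refine hequiv.symm.tendsto_nhds (tendsto_const_nhds.congr' ?_)
  filter_upwards [eventually_ge_atTop 1] with n hn
  rw [abs_div, abs_of_pos (by positivity : (0 : ℝ) < 2 * n)]
  field_simp
end

section
/- For every ℓ ∈ ℕ and every β ∈ ℝ, the Legendre polynomial satisfies P_ℓ(cos β) ≤ (1 + ℓ(ℓ+1) sin²β)^{−1/4}. -/
/-!
Write λ = ℓ(ℓ+1) and w(y) = 1 + λ(1 - y²), so that w(cos β) = 1 + ℓ(ℓ+1) sin²β and
P = P_ℓ solves (1 - y²)P'' - 2yP' + λP = 0. With S = wP' - (λy/2)P and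
R = λ(λ + 3/2)w + (5/4)λ²y², the Sonin-type function G = P² + S²/R satisfies, by the ODE,
(1 - y²)(wG²)' = 2y(6λ + 9λ² + (3/2)λ²(λ - 1)(1 - y²)) S² G / R²,
so wG² is nondecreasing on [0, 1]. The ODE at y = 1 gives S(1) = 0, hence for 0 ≤ x ≤ 1
P(x)⁴ w(x) ≤ w(x) G(x)² ≤ G(1)² = P(1)⁴ = 1; parity of P_ℓ covers x < 0.
-/

/-- The Legendre polynomials, defined by the standard three-term recurrence,
normalized so that `legendre ℓ 1 = 1`. -/
noncomputable def legendre : ℕ → ℝ → ℝ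
  | 0, _ => 1
  | 1, x => x
  | n + 2, x =>
      ((2 * n + 3) * x * legendre (n + 1) x - (n + 1) * legendre n x) / (n + 2)

open Set Polynomial

noncomputable section

theorem legendre_one : ∀ n, legendre n 1 = 1
  | 0 => rfl
  | 1 => rfl
  | n + 2 => by
    rw [legendre, legendre_one n, legendre_one (n + 1)]
    field_simp
    ring

theorem legendre_neg : ∀ n x, legendre n (-x) = (-1) ^ n * legendre n x
  | 0, _ => by simp [legendre]
  | 1, _ => by simp [legendre]
  | n + 2, x => by
    rw [legendre, legendre, legendre_neg n, legendre_neg (n + 1)]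
    ring

def legendrePoly : ℕ → ℝ[X]
  | 0 => 1
  | 1 => X
  | n + 2 => C ((n + 2 : ℝ)⁻¹) *
      ((2 * (n : ℝ[X]) + 3) * X * legendrePoly (n + 1) - ((n : ℝ[X]) + 1) * legendrePoly n)

theorem legendrePoly_recurrence (n : ℕ) :
    ((n : ℝ[X]) + 2) * legendrePoly (n + 2) =
      (2 * (n : ℝ[X]) + 3) * X * legendrePoly (n + 1) - ((n : ℝ[X]) + 1) * legendrePoly n := by
  have h : ((n : ℝ[X]) + 2) * C ((n + 2 : ℝ)⁻¹) = 1 := by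
    rw [show ((n : ℝ[X]) + 2) = C ((n : ℝ) + 2) by simp [map_ofNat], ← C_mul,
      mul_inv_cancel₀ (by positivity), C_1]
  rw [legendrePoly, ← mul_assoc, h, one_mul]

theorem eval_legendrePoly : ∀ n x, (legendrePoly n).eval x = legendre n x
  | 0, _ => by simp [legendrePoly, legendre]
  | 1, _ => by simp [legendrePoly, legendre]
  | n + 2, x => by
    simp [legendrePoly, legendre, eval_legendrePoly n, eval_legendrePoly (n + 1), div_eq_inv_mul]

theorem derivative_legendrePoly_recurrences (n : ℕ) :
    derivative (legendrePoly (n + 1)) =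
        X * derivative (legendrePoly n) + ((n : ℝ[X]) + 1) * legendrePoly n ∧
      X * derivative (legendrePoly (n + 1)) =
        derivative (legendrePoly n) + ((n : ℝ[X]) + 1) * legendrePoly (n + 1) := by
  induction n with
  | zero => simp [legendrePoly]
  | succ n ih =>
    obtain ⟨ih1, ih2⟩ := ih
    have hrec := legendrePoly_recurrence n
    have hd := congrArg derivative hrec
    simp only [derivative_mul, derivative_sub, derivative_add, derivative_natCast,
      derivative_X, derivative_ofNat, derivative_one, zero_mul, zero_add, add_zero, mul_one] at hd
    have h0 : ((n : ℝ[X]) + 2) ≠ 0 := by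
      rw [show ((n : ℝ[X]) + 2) = C ((n : ℝ) + 2) by simp [map_ofNat]]
      exact C_ne_zero.2 (by positivity)
    push_cast
    constructor
    · refine mul_left_cancel₀ h0 ?_
      linear_combination hd + ((n : ℝ[X]) + 1) * ih2
    · refine mul_left_cancel₀ h0 ?_
      linear_combination X * hd - ((n : ℝ[X]) + 2) * hrec
        + (2 * (n : ℝ[X]) + 3) * X * ih2 - ((n : ℝ[X]) + 2) * ih1

theorem legendrePoly_ode (n : ℕ) :
    (1 - X ^ 2) * derivative (derivative (legendrePoly n)) - 2 * X * derivative (legendrePoly n) =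
      -((n : ℝ[X]) * ((n : ℝ[X]) + 1)) * legendrePoly n := by
  cases n with
  | zero => simp [legendrePoly]
  | succ n =>
    obtain ⟨h1, h2⟩ := derivative_legendrePoly_recurrences n
    have hc : (1 - X ^ 2) * derivative (legendrePoly (n + 1)) =
        ((n : ℝ[X]) + 1) * (legendrePoly n - X * legendrePoly (n + 1)) := by
      linear_combination h1 - X * h2
    have hd := congrArg derivative hc
    simp only [derivative_mul, derivative_sub, derivative_add, derivative_natCast,
      derivative_X, derivative_one, derivative_X_pow, zero_mul, zero_add,
      add_zero, zero_sub, map_ofNat, Nat.cast_ofNat, Nat.add_one_sub_one, pow_one] at hd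
    push_cast
    linear_combination hd - ((n : ℝ[X]) + 1) * h2

section Sonin

variable (lam : ℝ) (f f' : ℝ → ℝ)

def legendreWeight (y : ℝ) : ℝ := 1 + lam * (1 - y ^ 2)

def soninNumer (y : ℝ) : ℝ := legendreWeight lam y * f' y - lam * y / 2 * f y

def soninDenom (y : ℝ) : ℝ :=
  lam * (lam + 3 / 2) * legendreWeight lam y + 5 / 4 * lam ^ 2 * y ^ 2

def soninFunction (y : ℝ) : ℝ := f y ^ 2 + soninNumer lam f f' y ^ 2 / soninDenom lam y

def soninEnergy (y : ℝ) : ℝ := legendreWeight lam y * soninFunction lam f f' y ^ 2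

theorem hasDerivAt_legendreWeight (y : ℝ) :
    HasDerivAt (legendreWeight lam) (-(2 * lam * y)) y := by
  refine ((((hasDerivAt_pow 2 y).const_sub 1).const_mul lam).const_add 1).congr_deriv ?_
  push_cast
  ring

variable {lam} {y : ℝ}

theorem one_le_legendreWeight (hlam : 0 ≤ lam) (hy : y ^ 2 ≤ 1) : 1 ≤ legendreWeight lam y := by
  unfold legendreWeight
  nlinarith

theorem soninDenom_pos (hlam : 0 < lam) (hy : y ^ 2 ≤ 1) : 0 < soninDenom lam y := by
  have := one_le_legendreWeight hlam.le hy
  unfold soninDenom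
  positivity

theorem soninFunction_nonneg (hlam : 0 < lam) (hy : y ^ 2 ≤ 1) :
    0 ≤ soninFunction lam f f' y := by
  have := soninDenom_pos hlam hy
  unfold soninFunction
  positivity

theorem sq_le_soninFunction (hlam : 0 < lam) (hy : y ^ 2 ≤ 1) :
    f y ^ 2 ≤ soninFunction lam f f' y := by
  have := soninDenom_pos hlam hy
  have : 0 ≤ soninNumer lam f f' y ^ 2 / soninDenom lam y := by positivity
  unfold soninFunction
  linarith

variable {f f'} {f'' : ℝ → ℝ}

theorem hasDerivAt_soninNumer (hf : HasDerivAt f (f' y) y) (hf' : HasDerivAt f' (f'' y) y) :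
    HasDerivAt (soninNumer lam f f')
      (legendreWeight lam y * f'' y - 5 / 2 * lam * y * f' y - lam / 2 * f y) y := by
  refine (((hasDerivAt_legendreWeight lam y).mul hf').sub
    ((((hasDerivAt_id y).const_mul lam).div_const 2).mul hf)).congr_deriv ?_
  simp only [id]
  ring

theorem hasDerivAt_soninDenom :
    HasDerivAt (soninDenom lam) (-(lam ^ 2 * (2 * lam + 1 / 2) * y)) y := by
  refine (((hasDerivAt_legendreWeight lam y).const_mul (lam * (lam + 3 / 2))).add
    ((hasDerivAt_pow 2 y).const_mul (5 / 4 * lam ^ 2))).congr_deriv ?_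
  push_cast
  ring

theorem hasDerivAt_soninFunction (hf : HasDerivAt f (f' y) y) (hf' : HasDerivAt f' (f'' y) y)
    (hR : soninDenom lam y ≠ 0) :
    HasDerivAt (soninFunction lam f f')
      (2 * f y * f' y + (2 * soninNumer lam f f' y *
        (legendreWeight lam y * f'' y - 5 / 2 * lam * y * f' y - lam / 2 * f y) * soninDenom lam y
        + soninNumer lam f f' y ^ 2 * (lam ^ 2 * (2 * lam + 1 / 2) * y)) / soninDenom lam y ^ 2)
      y := by
  refine ((hf.pow 2).add (((hasDerivAt_soninNumer hf hf').pow 2).div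
    hasDerivAt_soninDenom hR)).congr_deriv ?_
  simp only [Pi.pow_apply]
  push_cast
  ring

theorem soninEnergy_identity (hode : (1 - y ^ 2) * f'' y - 2 * y * f' y = -lam * f y) :
    (1 - y ^ 2) * (-(2 * lam * y) * (f y ^ 2 * soninDenom lam y + soninNumer lam f f' y ^ 2) *
      soninDenom lam y + 2 * legendreWeight lam y * (2 * f y * f' y * soninDenom lam y ^ 2
      + 2 * soninNumer lam f f' y * (legendreWeight lam y * f'' y - 5 / 2 * lam * y * f' y
        - lam / 2 * f y) * soninDenom lam y
      + soninNumer lam f f' y ^ 2 * (lam ^ 2 * (2 * lam + 1 / 2) * y)))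
      = 2 * y * (6 * lam + 9 * lam ^ 2 + 3 / 2 * lam ^ 2 * (lam - 1) * (1 - y ^ 2)) *
        soninNumer lam f f' y ^ 2 := by
  -- `f''` enters the left side only as `4 w² S R · (1 - y²) f''`, which the ODE eliminates.
  have h := congrArg
    (4 * legendreWeight lam y ^ 2 * soninNumer lam f f' y * soninDenom lam y * ·) hode
  simp only [soninNumer, soninDenom, legendreWeight] at h ⊢
  linear_combination h

theorem hasDerivAt_soninEnergy (hf : HasDerivAt f (f' y) y) (hf' : HasDerivAt f' (f'' y) y)
    (hR : soninDenom lam y ≠ 0) (hy : 1 - y ^ 2 ≠ 0)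
    (hode : (1 - y ^ 2) * f'' y - 2 * y * f' y = -lam * f y) :
    HasDerivAt (soninEnergy lam f f')
      (2 * y * (6 * lam + 9 * lam ^ 2 + 3 / 2 * lam ^ 2 * (lam - 1) * (1 - y ^ 2)) *
        soninNumer lam f f' y ^ 2 * soninFunction lam f f' y /
          ((1 - y ^ 2) * soninDenom lam y ^ 2)) y := by
  refine ((hasDerivAt_legendreWeight lam y).mul
    ((hasDerivAt_soninFunction hf hf' hR).pow 2)).congr_deriv ?_
  simp only [soninFunction, Pi.pow_apply, Nat.cast_ofNat, Nat.add_one_sub_one, pow_one]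
  field_simp
  linear_combination
    (f y ^ 2 * soninDenom lam y + soninNumer lam f f' y ^ 2) * soninEnergy_identity hode

theorem monotoneOn_soninEnergy (hlam : 0 < lam) (hf : ∀ y ∈ Icc 0 1, HasDerivAt f (f' y) y)
    (hf' : ∀ y ∈ Icc 0 1, HasDerivAt f' (f'' y) y)
    (hode : ∀ y ∈ Ioo 0 1, (1 - y ^ 2) * f'' y - 2 * y * f' y = -lam * f y) :
    MonotoneOn (soninEnergy lam f f') (Icc 0 1) := by
  have hsq : ∀ y ∈ Icc (0 : ℝ) 1, y ^ 2 ≤ 1 := fun y hy ↦ pow_le_one₀ hy.1 hy.2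
  have hR : ∀ y ∈ Icc (0 : ℝ) 1, soninDenom lam y ≠ 0 := fun y hy ↦
    (soninDenom_pos hlam (hsq y hy)).ne'
  have hderiv : ∀ y ∈ Ioo (0 : ℝ) 1, HasDerivAt (soninEnergy lam f f')
      (2 * y * (6 * lam + 9 * lam ^ 2 + 3 / 2 * lam ^ 2 * (lam - 1) * (1 - y ^ 2)) *
        soninNumer lam f f' y ^ 2 * soninFunction lam f f' y /
          ((1 - y ^ 2) * soninDenom lam y ^ 2)) y := fun y hy ↦
    hasDerivAt_soninEnergy (hf y (Ioo_subset_Icc_self hy)) (hf' y (Ioo_subset_Icc_self hy))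
      (hR y (Ioo_subset_Icc_self hy)) (by nlinarith [hy.1, hy.2]) (hode y hy)
  refine monotoneOn_of_deriv_nonneg (convex_Icc 0 1) (fun y hy ↦ ?_) ?_ (fun y hy ↦ ?_)
  · exact ((hasDerivAt_legendreWeight lam y).continuousAt.mul
      ((hasDerivAt_soninFunction (hf y hy) (hf' y hy) (hR y hy)).continuousAt.pow 2)
      ).continuousWithinAt
  · rw [interior_Icc]
    exact fun y hy ↦ (hderiv y hy).differentiableAt.differentiableWithinAt
  · rw [interior_Icc] at hy
    rw [(hderiv y hy).deriv]
    have hy0 := hy.1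
    have hy1 : 0 < 1 - y ^ 2 := by nlinarith [hy.2]
    have hK : 0 ≤ 6 * lam + 9 * lam ^ 2 + 3 / 2 * lam ^ 2 * (lam - 1) * (1 - y ^ 2) := by
      nlinarith [mul_nonneg (sq_nonneg lam) hy1.le]
    have hG := soninFunction_nonneg f f' hlam (hsq y (Ioo_subset_Icc_self hy))
    positivity

theorem soninEnergy_one (h : 2 * f' 1 = lam * f 1) : soninEnergy lam f f' 1 = f 1 ^ 4 := by
  have hS : soninNumer lam f f' 1 = 0 := by
    simp only [soninNumer, legendreWeight]
    linarith
  simp only [soninEnergy, soninFunction, hS, legendreWeight]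
  ring

theorem pow_four_mul_legendreWeight_le_of_ode (hlam : 0 < lam)
    (hf : ∀ y ∈ Icc 0 1, HasDerivAt f (f' y) y) (hf' : ∀ y ∈ Icc 0 1, HasDerivAt f' (f'' y) y)
    (hode : ∀ y ∈ Icc 0 1, (1 - y ^ 2) * f'' y - 2 * y * f' y = -lam * f y)
    {x : ℝ} (hx : x ∈ Icc 0 1) : f x ^ 4 * legendreWeight lam x ≤ f 1 ^ 4 := by
  have hx2 : x ^ 2 ≤ 1 := pow_le_one₀ hx.1 hx.2
  have hfG := sq_le_soninFunction f f' hlam hx2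
  have hw := one_le_legendreWeight hlam.le hx2
  have h1 : (1 : ℝ) ∈ Icc 0 1 := right_mem_Icc.2 zero_le_one
  calc f x ^ 4 * legendreWeight lam x
      = legendreWeight lam x * (f x ^ 2) ^ 2 := by ring
    _ ≤ soninEnergy lam f f' x := by unfold soninEnergy; gcongr
    _ ≤ soninEnergy lam f f' 1 :=
        monotoneOn_soninEnergy hlam hf hf' (fun y hy ↦ hode y (Ioo_subset_Icc_self hy)) hx h1 hx.2
    _ = f 1 ^ 4 := soninEnergy_one (by linarith [hode 1 h1])

end Sonin

theorem le_rpow_neg_inv_of_pow_mul_le_one {a w : ℝ} {n : ℕ} (hn : n ≠ 0) (hw : 0 < w)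
    (h : a ^ n * w ≤ 1) : a ≤ w ^ (-(1 : ℝ) / n) := by
  rcases le_or_gt a 0 with ha | ha
  · exact ha.trans (Real.rpow_nonneg hw.le _)
  rw [neg_div, Real.rpow_neg hw.le, ← Real.inv_rpow hw.le, one_div,
    Real.le_rpow_inv_iff_of_pos ha.le (inv_nonneg.2 hw.le) (by positivity), Real.rpow_natCast,
    ← one_div, le_div_iff₀ hw]
  exact h

theorem legendre_pow_four_mul_le_one (ℓ : ℕ) {x : ℝ} (hx : x ^ 2 ≤ 1) :
    legendre ℓ x ^ 4 * (1 + ℓ * (ℓ + 1) * (1 - x ^ 2)) ≤ 1 := by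
  rcases Nat.eq_zero_or_pos ℓ with rfl | hℓ
  · simp [legendre]
  have hode (y : ℝ) : (1 - y ^ 2) * (derivative (derivative (legendrePoly ℓ))).eval y
      - 2 * y * (derivative (legendrePoly ℓ)).eval y =
        -(ℓ * (ℓ + 1)) * (legendrePoly ℓ).eval y := by
    simpa using congrArg (eval y) (legendrePoly_ode ℓ)
  have habs : |x| ∈ Icc 0 1 := ⟨abs_nonneg x, (sq_le_one_iff_abs_le_one x).1 hx⟩
  have key := pow_four_mul_legendreWeight_le_of_ode (by positivity)
    (fun y _ ↦ (legendrePoly ℓ).hasDerivAt y)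
    (fun y _ ↦ (derivative (legendrePoly ℓ)).hasDerivAt y) (fun y _ ↦ hode y) habs
  have hsym : legendre ℓ |x| ^ 4 = legendre ℓ x ^ 4 := by
    rcases abs_choice x with h | h <;> rw [h]
    rw [legendre_neg, mul_pow, ← pow_mul, mul_comm ℓ 4, pow_mul]
    norm_num
  simpa only [eval_legendrePoly, legendre_one, one_pow, legendreWeight, sq_abs, hsym] using key

end

/-- For every `ℓ ∈ ℕ` and every `β ∈ ℝ`,
`P_ℓ(cos β) ≤ (1 + ℓ(ℓ+1) sin²β)^{-1/4}`. -/
theorem legendre_cos_upper_bound (ℓ : ℕ) (β : ℝ) :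
    legendre ℓ (Real.cos β) ≤
      (1 + (ℓ : ℝ) * (ℓ + 1) * Real.sin β ^ 2) ^ (-(1 : ℝ) / 4) := by
  rw [Real.sin_sq]
  have hw : 0 < 1 + (ℓ : ℝ) * (ℓ + 1) * (1 - Real.cos β ^ 2) :=
    zero_lt_one.trans_le (one_le_legendreWeight (by positivity) (Real.cos_sq_le_one β))
  exact_mod_cast le_rpow_neg_inv_of_pow_mul_le_one four_ne_zero hw
    (legendre_pow_four_mul_le_one ℓ (Real.cos_sq_le_one β))
end

section
/- Let γ ∈ (0,2) and suppose (a_ℓ)_{ℓ≥1} are nonnegative reals with a_ℓ ≥ C ℓ^{−(1+γ)} for all sufficiently large ℓ, for some C > 0. Let β_n ~ c/n with c > 0 and define η_n² = ∑_{ℓ≥1} (1 − (cos(β_n/2))^{2ℓ})² a_ℓ. Then η_n = Ω(n^{−γ}) as n → ∞. -/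
/-! With `x = β n / 2 ≍ 1 / n` we have `cos x ≤ exp (-2 x² / π²)`, so `cos x ^ (2ℓ) ≤ 1/2` as soon as
`ℓ ≥ L = M n²` for a constant `M` of order `1 / c²`. The `L` terms with `ℓ ∈ (L, 2L]` then each
contribute at least `(C / 4) (2L)^{-(1+γ)}`, so `η_n² ≳ L^{-γ} ≍ n^{-2γ}`. -/

open Real Filter Topology

lemma Real.cos_le_exp_neg_sq {x : ℝ} (hx : |x| ≤ π) : cos x ≤ exp (-(2 / π ^ 2 * x ^ 2)) := by
  linarith [cos_le_one_sub_mul_cos_sq hx, add_one_le_exp (-(2 / π ^ 2 * x ^ 2))]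

lemma Real.cos_pow_le_half {x : ℝ} {m : ℕ} (hx : |x| ≤ π / 2)
    (hm : π ^ 2 * log 2 ≤ 2 * m * x ^ 2) : cos x ^ m ≤ 1 / 2 := by
  have hcos : 0 ≤ cos x := cos_nonneg_of_mem_Icc (abs_le.mp hx)
  have hexp : m * -(2 / π ^ 2 * x ^ 2) ≤ -log 2 := by
    have : π ^ 2 * log 2 ≤ π ^ 2 * (m * (2 / π ^ 2 * x ^ 2)) := by
      field_simp; linarith
    linarith [le_of_mul_le_mul_left this (by positivity)]
  calc cos x ^ m ≤ exp (-(2 / π ^ 2 * x ^ 2)) ^ m :=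
        pow_le_pow_left₀ hcos (cos_le_exp_neg_sq (by linarith [pi_pos])) m
    _ = exp (m * -(2 / π ^ 2 * x ^ 2)) := (exp_nat_mul _ m).symm
    _ ≤ exp (-log 2) := exp_le_exp.mpr hexp
    _ = 1 / 2 := by rw [exp_neg, exp_log two_pos, one_div]

lemma Real.cos_sq_pow_le_half_of_div_le {x c : ℝ} {M n : ℕ} (hx : |x| ≤ π / 2) (hc : 0 ≤ c)
    (hn : 0 < n) (hcx : c / n / 4 ≤ x) (hM : 4 * π ^ 2 * log 2 ≤ M * c ^ 2) :
    (cos x ^ 2) ^ (M * n ^ 2) ≤ 1 / 2 := by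
  have hx2 : c ^ 2 / 16 ≤ n ^ 2 * x ^ 2 := by
    calc c ^ 2 / 16 = n ^ 2 * (c / n / 4) ^ 2 := by field_simp; ring
      _ ≤ n ^ 2 * x ^ 2 := by gcongr
  rw [← pow_mul]
  refine cos_pow_le_half hx ?_
  push_cast
  nlinarith [mul_le_mul_of_nonneg_left hx2 (Nat.cast_nonneg M)]

lemma summable_sq_one_sub_pow_mul {q : ℝ} (hq0 : 0 ≤ q) (hq1 : q ≤ 1) {a : ℕ → ℝ}
    (ha0 : ∀ ℓ, 0 ≤ a ℓ) (hasum : Summable a) :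
    Summable fun j : ℕ => (1 - q ^ (j + 1)) ^ 2 * a (j + 1) := by
  refine ((summable_nat_add_iff 1).mpr hasum).of_nonneg_of_le
    (fun j => mul_nonneg (sq_nonneg _) (ha0 _)) fun j => ?_
  have hp0 : 0 ≤ q ^ (j + 1) := pow_nonneg hq0 _
  have hp1 : q ^ (j + 1) ≤ 1 := pow_le_one₀ hq0 hq1
  exact mul_le_of_le_one_left (ha0 _) (pow_le_one₀ (by linarith) (by linarith))

lemma le_tsum_sq_one_sub_pow_mul {q b : ℝ} {L : ℕ} (hq0 : 0 ≤ q) (hq1 : q ≤ 1)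
    (hqL : q ^ L ≤ 1 / 2) {a : ℕ → ℝ} (ha0 : ∀ ℓ, 0 ≤ a ℓ) (hasum : Summable a)
    (hab : ∀ ℓ, L < ℓ → ℓ ≤ 2 * L → b ≤ a ℓ) :
    L * (b / 4) ≤ ∑' j : ℕ, (1 - q ^ (j + 1)) ^ 2 * a (j + 1) := by
  have hterm : ∀ j ∈ Finset.Ico L (2 * L), b / 4 ≤ (1 - q ^ (j + 1)) ^ 2 * a (j + 1) := by
    intro j hj
    obtain ⟨hLj, hj2L⟩ := Finset.mem_Ico.mp hj
    have hpow : q ^ (j + 1) ≤ 1 / 2 := (pow_le_pow_of_le_one hq0 hq1 (by omega)).trans hqL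
    have hsq : 1 / 4 ≤ (1 - q ^ (j + 1)) ^ 2 := by nlinarith
    have hb := hab (j + 1) (by omega) (by omega)
    nlinarith [ha0 (j + 1)]
  calc (L : ℝ) * (b / 4) = ∑ _j ∈ Finset.Ico L (2 * L), b / 4 := by
        rw [Finset.sum_const, Nat.card_Ico, nsmul_eq_mul, two_mul, Nat.add_sub_cancel]
    _ ≤ ∑ j ∈ Finset.Ico L (2 * L), (1 - q ^ (j + 1)) ^ 2 * a (j + 1) :=
        Finset.sum_le_sum hterm
    _ ≤ _ := (summable_sq_one_sub_pow_mul hq0 hq1 ha0 hasum).sum_le_tsum _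
        fun j _ => mul_nonneg (sq_nonneg _) (ha0 _)

lemma Real.mul_sq_rpow {M n : ℝ} (hM : 0 ≤ M) (hn : 0 ≤ n) (γ : ℝ) :
    (M * n ^ 2) ^ γ = M ^ γ * (n ^ γ) ^ 2 := by
  rw [mul_rpow hM (sq_nonneg n), rpow_pow_comm hn]

lemma Real.mul_two_mul_rpow_neg_one_add {x : ℝ} (hx : 0 < x) (γ : ℝ) :
    x * (2 * x) ^ (-(1 + γ)) = 2 ^ (-(1 + γ)) * x ^ (-γ) := by
  rw [mul_rpow zero_le_two hx.le, mul_left_comm, mul_comm x, ← rpow_add_one hx.ne']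
  ring_nf

lemma rpow_le_tsum_sq_one_sub_pow_mul {q C γ : ℝ} {L N₀ : ℕ} (hq0 : 0 ≤ q) (hq1 : q ≤ 1)
    (hqL : q ^ L ≤ 1 / 2) (hL : 0 < L) (hN₀L : N₀ ≤ L) (hC : 0 ≤ C) (hγ : -1 ≤ γ)
    {a : ℕ → ℝ} (ha0 : ∀ ℓ, 0 ≤ a ℓ) (hasum : Summable a)
    (halow : ∀ ℓ ≥ N₀, C * (ℓ : ℝ) ^ (-(1 + γ)) ≤ a ℓ) :
    C / 4 * 2 ^ (-(1 + γ)) * (L : ℝ) ^ (-γ) ≤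
      ∑' j : ℕ, (1 - q ^ (j + 1)) ^ 2 * a (j + 1) := by
  have hab : ∀ ℓ, L < ℓ → ℓ ≤ 2 * L → C * (2 * L : ℝ) ^ (-(1 + γ)) ≤ a ℓ := fun ℓ h1 h2 =>
    (mul_le_mul_of_nonneg_left (rpow_le_rpow_of_nonpos (by exact_mod_cast hL.trans h1)
      (by exact_mod_cast h2) (by linarith)) hC).trans (halow ℓ (by omega))
  calc C / 4 * 2 ^ (-(1 + γ)) * (L : ℝ) ^ (-γ) = L * (C * (2 * L : ℝ) ^ (-(1 + γ)) / 4) := by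
        rw [mul_div_assoc', mul_left_comm, mul_two_mul_rpow_neg_one_add (by positivity)]; ring
    _ ≤ _ := le_tsum_sq_one_sub_pow_mul hq0 hq1 hqL ha0 hasum hab

lemma eventually_le_and_le_of_tendsto_div {α : Type*} {l : Filter α} {f g : α → ℝ}
    (hg : ∀ᶠ x in l, 0 < g x) (h : Tendsto (fun x => f x / g x) l (𝓝 1)) :
    ∀ᶠ x in l, g x / 2 ≤ f x ∧ f x ≤ 2 * g x := by
  filter_upwards [hg, h.eventually (lt_mem_nhds one_half_lt_one),
    h.eventually (gt_mem_nhds one_lt_two)] with x hgx hlo hhi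
  constructor
  · rw [lt_div_iff₀ hgx] at hlo; linarith
  · rw [div_lt_iff₀ hgx] at hhi; linarith

/-- Let `γ ∈ (0,2)`, `(a_ℓ)` nonnegative and summable with `a_ℓ ≥ C ℓ^{-(1+γ)}` for
large `ℓ`, and `β_n ~ c/n` with `c > 0`.  If
`η_n² = ∑_{ℓ≥1} (1 - cos(β_n/2)^{2ℓ})² a_ℓ`, then `η_n = Ω(n^{-γ})`. -/
theorem eigenvector_lower_bound (γ c C : ℝ)
    (hγ : γ ∈ Set.Ioo (0 : ℝ) 2) (hc : 0 < c) (hC : 0 < C)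
    (a : ℕ → ℝ) (ha0 : ∀ ℓ, 0 ≤ a ℓ) (hasum : Summable a)
    (halow : ∀ᶠ ℓ : ℕ in atTop, C * (ℓ : ℝ) ^ (-(1 + γ)) ≤ a ℓ)
    (β : ℕ → ℝ)
    (hβ : Tendsto (fun n : ℕ => β n / (c / n)) atTop (nhds 1)) :
    ∃ K > 0, ∀ᶠ n : ℕ in atTop,
      K * (n : ℝ) ^ (-γ) ≤
        Real.sqrt
          (∑' ℓ : ℕ, (1 - Real.cos (β n / 2) ^ (2 * (ℓ + 1))) ^ 2 * a (ℓ + 1)) := by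
  obtain ⟨M, hM⟩ := exists_nat_gt (4 * π ^ 2 * log 2 / c ^ 2)
  have hM0 : 0 < M := by exact_mod_cast (div_nonneg (by positivity) (sq_nonneg c)).trans_lt hM
  have hMc : 4 * π ^ 2 * log 2 ≤ M * c ^ 2 := ((div_lt_iff₀ (by positivity)).mp hM).le
  obtain ⟨N₀, hN₀⟩ := eventually_atTop.mp halow
  set D := C / 4 * 2 ^ (-(1 + γ)) * (M : ℝ) ^ (-γ)
  refine ⟨√D, by positivity, ?_⟩
  have hcn : ∀ᶠ n : ℕ in atTop, 0 < c / n :=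
    (eventually_gt_atTop 0).mono fun n hn => div_pos hc (Nat.cast_pos.mpr hn)
  filter_upwards [eventually_le_and_le_of_tendsto_div hcn hβ, hcn,
    (tendsto_const_div_atTop_nhds_zero_nat c).eventually (gt_mem_nhds one_pos),
    eventually_ge_atTop (max N₀ 1)] with n ⟨hβlo, hβhi⟩ hcn0 hcn1 hn
  have hn0 : 0 < n := (le_max_right _ _).trans hn
  have hx : |β n / 2| ≤ π / 2 := abs_le.mpr ⟨by linarith [pi_pos], by linarith [pi_gt_three]⟩
  have hcos := cos_sq_pow_le_half_of_div_le hx hc.le hn0 (by linarith) hMc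
  have hN₀L : N₀ ≤ M * n ^ 2 := (le_max_left _ _).trans <| hn.trans <|
    (Nat.le_self_pow two_ne_zero n).trans (Nat.le_mul_of_pos_left _ hM0)
  have hsum := rpow_le_tsum_sq_one_sub_pow_mul (sq_nonneg _) (cos_sq_le_one _) hcos
    (by positivity) hN₀L hC.le (by linarith [hγ.1]) ha0 hasum hN₀
  simp_rw [← pow_mul] at hsum
  push_cast at hsum
  rw [mul_sq_rpow (Nat.cast_nonneg M) (Nat.cast_nonneg n), ← mul_assoc] at hsum
  calc √D * (n : ℝ) ^ (-γ) = √(D * ((n : ℝ) ^ (-γ)) ^ 2) := by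
        rw [sqrt_mul' _ (sq_nonneg _), sqrt_sq (by positivity)]
    _ ≤ _ := sqrt_le_sqrt hsum
end

section
/- Let ψ : S² → ℝ be smooth away from the equator and, in coordinates x = φ−π ∈ [−ε,ε], y = θ−π/2 ∈ [−ε,ε], equal to ψ = (1 + e^{−x/|y|})^{−1} for y ≠ 0. Then ∂ψ/∂φ is not square-integrable near the equator: ∫∫_{D'} (e^{−x/y}/(1+e^{−x/y})²)² y^{−2} dx dy = +∞, where D' = {(x,y) ∈ [0,ε]² : x ≤ y}. -/
/-!
On the triangle `0 ≤ x ≤ y ≤ ε` the exponent `-x/y` lies in `[-1, 0]`, so the factor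
`e^{-x/y} / (1 + e^{-x/y})²` is bounded below by `e^{-1}/4` and the integrand dominates
`c / y²`. Integrating first in `x` over `[0, y]` leaves `c / y`, which is not integrable at `0`.
-/

open MeasureTheory Real Set
open scoped ENNReal

theorem lintegral_Ioo_zero_ofReal_inv_eq_top {ε : ℝ} (hε : 0 < ε) :
    ∫⁻ y in Ioo 0 ε, ENNReal.ofReal y⁻¹ = ∞ := by
  by_contra h
  rw [← ne_eq, lintegral_ofReal_ne_top_iff_integrable measurable_inv.aestronglyMeasurable
    (ae_restrict_of_forall_mem measurableSet_Ioo fun y hy ↦ inv_nonneg.2 hy.1.le),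
    ← IntegrableOn, ← intervalIntegrable_iff_integrableOn_Ioo_of_le hε.le,
    intervalIntegrable_inv_iff] at h
  simp [hε.ne] at h

theorem exp_neg_one_div_four_le_exp_div_one_add_exp_sq {a : ℝ} (ha : a ∈ Icc (-1) 0) :
    exp (-1) / 4 ≤ exp a / (1 + exp a) ^ 2 := by
  have hexp_le_one : exp a ≤ 1 := exp_le_one_iff.2 ha.2
  have hden : (1 + exp a) ^ 2 ≤ 4 := by nlinarith [exp_pos a]
  exact div_le_div₀ (exp_pos a).le (exp_le_exp.2 ha.1) (by positivity) hden

def triangle (ε : ℝ) : Set (ℝ × ℝ) := {p | p.1 ∈ Icc 0 ε ∧ p.2 ∈ Icc 0 ε ∧ p.1 ≤ p.2}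

theorem measurableSet_triangle (ε : ℝ) : MeasurableSet (triangle ε) :=
  (measurableSet_Icc.preimage measurable_fst).inter ((measurableSet_Icc.preimage measurable_snd).inter
    (measurableSet_le measurable_fst measurable_snd))

theorem setLIntegral_triangle_comp_snd {ε : ℝ} {g : ℝ → ℝ≥0∞} (hg : Measurable g) :
    ∫⁻ p in triangle ε, g p.2 = ∫⁻ y in Icc 0 ε, ENNReal.ofReal y * g y := by
  have hsection : ∀ y, ∫⁻ x, (triangle ε).indicator (fun p ↦ g p.2) (x, y)
      = (Icc 0 ε).indicator (fun y ↦ ENNReal.ofReal y * g y) y := by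
    intro y
    by_cases hy : y ∈ Icc 0 ε
    · have hslice : ∀ x, (triangle ε).indicator (fun p ↦ g p.2) (x, y)
          = (Icc 0 y).indicator (fun _ ↦ g y) x := by
        intro x
        simp only [indicator, triangle, mem_Icc]
        grind
      simp_rw [hslice, indicator_of_mem hy, lintegral_indicator_const measurableSet_Icc,
        volume_Icc, sub_zero, mul_comm]
    · have hslice : ∀ x, (triangle ε).indicator (fun p ↦ g p.2) (x, y) = 0 := fun x ↦
        indicator_of_notMem (fun h ↦ hy h.2.1) _
      simp [hslice, indicator_of_notMem hy]
  rw [← lintegral_indicator (measurableSet_triangle ε), Measure.volume_eq_prod,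
    lintegral_prod_symm' ((triangle ε).indicator fun p ↦ g p.2)
      ((hg.comp measurable_snd).indicator (measurableSet_triangle ε)),
    ← lintegral_indicator measurableSet_Icc]
  simp_rw [hsection]

theorem dphi_not_square_integrable_general (ε : ℝ) (hε : 0 < ε) :
    ∫⁻ p in {p : ℝ × ℝ | p.1 ∈ Icc 0 ε ∧ p.2 ∈ Icc 0 ε ∧ p.1 ≤ p.2},
        ENNReal.ofReal
          ((Real.exp (-p.1 / p.2) / (1 + Real.exp (-p.1 / p.2)) ^ 2) ^ 2 / p.2 ^ 2)
      = ⊤ := by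
  set c : ℝ := (exp (-1) / 4) ^ 2
  -- the exponent `-x/y` stays in `[-1, 0]` also at the junk value `y = 0`
  have hbound : ∀ p ∈ triangle ε,
      c / p.2 ^ 2 ≤ (exp (-p.1 / p.2) / (1 + exp (-p.1 / p.2)) ^ 2) ^ 2 / p.2 ^ 2 := by
    rintro ⟨x, y⟩ ⟨⟨hx, -⟩, ⟨hy, -⟩, hxy⟩
    have hexponent : -x / y ∈ Icc (-1) 0 := by
      rw [neg_div, mem_Icc, neg_le_neg_iff, neg_nonpos]
      exact ⟨div_le_one_of_le₀ hxy hy, div_nonneg hx hy⟩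
    exact div_le_div_of_nonneg_right (pow_le_pow_left₀ (by positivity)
      (exp_neg_one_div_four_le_exp_div_one_add_exp_sq hexponent) 2) (sq_nonneg y)
  rw [eq_top_iff]
  calc ∞ = ENNReal.ofReal c * ∫⁻ y in Ioo 0 ε, ENNReal.ofReal y⁻¹ := by
        rw [lintegral_Ioo_zero_ofReal_inv_eq_top hε, ENNReal.mul_top (by positivity)]
    _ = ∫⁻ y in Ioo 0 ε, ENNReal.ofReal y * ENNReal.ofReal (c / y ^ 2) := by
        rw [← lintegral_const_mul _ measurable_inv.ennreal_ofReal]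
        refine setLIntegral_congr_fun measurableSet_Ioo fun y hy ↦ ?_
        rw [← ENNReal.ofReal_mul (by positivity), ← ENNReal.ofReal_mul hy.1.le]
        field_simp [hy.1.ne']
    _ ≤ ∫⁻ y in Icc 0 ε, ENNReal.ofReal y * ENNReal.ofReal (c / y ^ 2) :=
        lintegral_mono_set Ioo_subset_Icc_self
    _ = ∫⁻ p in triangle ε, ENNReal.ofReal (c / p.2 ^ 2) :=
        (setLIntegral_triangle_comp_snd (by fun_prop)).symm
    _ ≤ _ := setLIntegral_mono' (measurableSet_triangle ε) fun p hp ↦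
        ENNReal.ofReal_le_ofReal (hbound p hp)

/-- The `φ`-derivative of the wave-function `ψ = (1 + e^{-x/|y|})⁻¹` (in coordinates
`x = φ - π`, `y = θ - π/2`) is not square-integrable near the equator:
`∫∫_{D'} (e^{-x/y}/(1+e^{-x/y})²)² y⁻² dx dy = +∞` on `D' = {(x,y) ∈ [0,ε]² : x ≤ y}`. -/
theorem dphi_not_square_integrable (ε : ℝ) (hε : 0 < ε) (hε' : ε < Real.pi / 2) :
    ∫⁻ p in {p : ℝ × ℝ | p.1 ∈ Icc 0 ε ∧ p.2 ∈ Icc 0 ε ∧ p.1 ≤ p.2},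
        ENNReal.ofReal
          ((Real.exp (-p.1 / p.2) / (1 + Real.exp (-p.1 / p.2)) ^ 2) ^ 2 / p.2 ^ 2)
      = ⊤ :=
  dphi_not_square_integrable_general ε hε
end
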